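/- Proposition 9, MIPS part (difference of absolute biases of MIPS and CHIPS). In the joint finite setting with clusters and embeddings, assume the conditional mean reward q : X → C → A → E → ℝ is nonnegative and factors both through the embedding pair and through the cluster pair: there are qE : X → E → ℝ and q̄ : A → C → ℝ with q x c a e = qE x e = q̄ a c for all x, c, a, e. Then |Bias(ω_MIPS)| − |Bias(ω_CHIPS)| = Σ_x pX x · Σ_{e : p(e|x,π₀) = 0} p(e|x,π) · qE x e − Σ_c p(c) · Σ_{a : p(a|c,π₀) = 0} p(a|c,π) · q̄ a c, where ω_MIPS(x,c,a,e) = w(x,e), ω_CHIPS(x,c,a,e) = w(a,c), and Bias(ω) = Σ_{x,c,a,e} P₀(x,c,a,e) · ω(x,c,a,e) · q x c a e − V(π). -/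

import Mathlib

open Finset

namespace OPE

noncomputable section

variable {X C A E : Type*} [Fintype X] [Fintype C] [Fintype A] [Fintype E]
  [Nonempty X] [Nonempty C] [Nonempty A] [Nonempty E]

/-- Cluster marginal `p(c) = Σ_x pX x * pC x c`. -/
def pc (pX : X → ℝ) (pC : X → C → ℝ) (c : C) : ℝ :=
  ∑ x, pX x * pC x c

/-- Conditional context distribution `p(x|c)` (zero when `p(c) = 0`). -/
def pxc (pX : X → ℝ) (pC : X → C → ℝ) (x : X) (c : C) : ℝ :=
  pX x * pC x c / pc pX pC c

/-- `p(a|c,ρ) = Σ_x p(x|c) * ρ x a`. -/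
def pac (pX : X → ℝ) (pC : X → C → ℝ) (ρ : X → A → ℝ) (c : C) (a : A) : ℝ :=
  ∑ x, pxc pX pC x c * ρ x a

/-- Marginal embedding distribution `p(e|x,ρ) = Σ_a ρ x a * pE x a e`. -/
def pe (pE : X → A → E → ℝ) (ρ : X → A → ℝ) (x : X) (e : E) : ℝ :=
  ∑ a, ρ x a * pE x a e

/-- IPS weight `w(a,x) = π x a / π₀ x a` (with the convention `t/0 = 0`). -/
def wIPS (π π₀ : X → A → ℝ) (a : A) (x : X) : ℝ := π x a / π₀ x a

/-- CHIPS weight `w(a,c) = p(a|c,π) / p(a|c,π₀)` (with the convention `t/0 = 0`). -/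
def wCHIPS (pX : X → ℝ) (pC : X → C → ℝ) (π π₀ : X → A → ℝ) (a : A) (c : C) : ℝ :=
  pac pX pC π c a / pac pX pC π₀ c a

/-- MIPS weight `w(x,e) = p(e|x,π) / p(e|x,π₀)` (with the convention `t/0 = 0`). -/
def wMIPS (pE : X → A → E → ℝ) (π π₀ : X → A → ℝ) (x : X) (e : E) : ℝ :=
  pe pE π x e / pe pE π₀ x e

/-- Logging joint distribution `P₀(x,c,a,e)`. -/
def P0 (pX : X → ℝ) (pC : X → C → ℝ) (π₀ : X → A → ℝ) (pE : X → A → E → ℝ)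
    (x : X) (c : C) (a : A) (e : E) : ℝ :=
  pX x * pC x c * π₀ x a * pE x a e

/-- Policy value in the joint setting. -/
def V4 (pX : X → ℝ) (pC : X → C → ℝ) (π : X → A → ℝ) (pE : X → A → E → ℝ)
    (q : X → C → A → E → ℝ) : ℝ :=
  ∑ x, ∑ c, ∑ a, ∑ e, pX x * pC x c * π x a * pE x a e * q x c a e

/-- Single-sample mean of a weighted estimator in the joint setting. -/
def mu4 (pX : X → ℝ) (pC : X → C → ℝ) (π₀ : X → A → ℝ) (pE : X → A → E → ℝ)
    (q : X → C → A → E → ℝ) (ω : X → C → A → E → ℝ) : ℝ :=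
  ∑ x, ∑ c, ∑ a, ∑ e, P0 pX pC π₀ pE x c a e * ω x c a e * q x c a e

/-- Bias of a weighted estimator in the joint setting. -/
def bias4 (pX : X → ℝ) (pC : X → C → ℝ) (π π₀ : X → A → ℝ) (pE : X → A → E → ℝ)
    (q : X → C → A → E → ℝ) (ω : X → C → A → E → ℝ) : ℝ :=
  mu4 pX pC π₀ pE q ω - V4 pX pC π pE q

/-- Single-sample variance of a weighted estimator in the joint setting. -/
def var4 (pX : X → ℝ) (pC : X → C → ℝ) (π₀ : X → A → ℝ) (pE : X → A → E → ℝ)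
    (q m2 : X → C → A → E → ℝ) (ω : X → C → A → E → ℝ) : ℝ :=
  (∑ x, ∑ c, ∑ a, ∑ e, P0 pX pC π₀ pE x c a e * ω x c a e ^ 2 * m2 x c a e)
    - (mu4 pX pC π₀ pE q ω) ^ 2


end

/-! With the convention `t / 0 = 0`, a ratio weight `p / p₀` reproduces `p` exactly where
`p₀ > 0` and vanishes where `p₀ = 0`. So the mean of a ratio-weighted estimator misses exactly the
target mass on the unsupported region, and its bias is minus that (nonnegative) mass.
Since `q` factors through `(x, e)`, both the MIPS mean and `V(π)` marginalise to per-context sums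
over embeddings; since `q` also factors through `(a, c)`, the CHIPS mean and `V(π)` marginalise to
per-cluster sums over actions. -/

section

variable {X C A E : Type*}

theorem mul_div_mul_sub_eq_neg_ite (p₀ p f : ℝ) :
    p₀ * (p / p₀) * f - p * f = -(if p₀ = 0 then p * f else 0) := by
  by_cases h : p₀ = 0
  · simp [h]
  · rw [if_neg h, mul_div_cancel₀ _ h, sub_self, neg_zero]

theorem sum_mul_sum_ratio_weighted_sub {κ ι : Type*} [Fintype κ] [Fintype ι]
    (m : κ → ℝ) (p p₀ f : κ → ι → ℝ) :
    ∑ k, m k * ∑ i, p₀ k i * (p k i / p₀ k i) * f k i - ∑ k, m k * ∑ i, p k i * f k i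
      = -∑ k, m k * ∑ i, if p₀ k i = 0 then p k i * f k i else 0 := by
  simp only [← sum_sub_distrib, ← mul_sub, mul_div_mul_sub_eq_neg_ite, sum_neg_distrib,
    mul_neg]

theorem sum_mul_sum_ite_nonneg {κ ι : Type*} [Fintype κ] [Fintype ι]
    {m : κ → ℝ} {p f : κ → ι → ℝ} (p₀ : κ → ι → ℝ) (hm : ∀ k, 0 ≤ m k)
    (hp : ∀ k i, 0 ≤ p k i) (hf : ∀ k i, 0 ≤ f k i) :
    0 ≤ ∑ k, m k * ∑ i, if p₀ k i = 0 then p k i * f k i else 0 :=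
  sum_nonneg fun k _ => mul_nonneg (hm k) <| sum_nonneg fun i _ => by
    split_ifs
    exacts [mul_nonneg (hp k i) (hf k i), le_rfl]

theorem pe_nonneg [Fintype A] {pE : X → A → E → ℝ} {ρ : X → A → ℝ}
    (hρ : ∀ x a, 0 ≤ ρ x a) (hpE : ∀ x a e, 0 ≤ pE x a e) (x : X) (e : E) :
    0 ≤ pe pE ρ x e :=
  sum_nonneg fun a _ => mul_nonneg (hρ x a) (hpE x a e)

theorem pc_nonneg [Fintype X] {pX : X → ℝ} {pC : X → C → ℝ} (hpX0 : ∀ x, 0 ≤ pX x)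
    (hpC0 : ∀ x c, 0 ≤ pC x c) (c : C) : 0 ≤ pc pX pC c :=
  sum_nonneg fun x _ => mul_nonneg (hpX0 x) (hpC0 x c)

theorem pac_nonneg [Fintype X] {pX : X → ℝ} {pC : X → C → ℝ} {ρ : X → A → ℝ}
    (hpX0 : ∀ x, 0 ≤ pX x) (hpC0 : ∀ x c, 0 ≤ pC x c) (hρ : ∀ x a, 0 ≤ ρ x a)
    (c : C) (a : A) : 0 ≤ pac pX pC ρ c a :=
  sum_nonneg fun x _ => mul_nonneg
    (div_nonneg (mul_nonneg (hpX0 x) (hpC0 x c)) (pc_nonneg hpX0 hpC0 c)) (hρ x a)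

theorem pc_mul_pxc [Fintype X] {pX : X → ℝ} {pC : X → C → ℝ} (hpX0 : ∀ x, 0 ≤ pX x)
    (hpC0 : ∀ x c, 0 ≤ pC x c) (x : X) (c : C) :
    pc pX pC c * pxc pX pC x c = pX x * pC x c := by
  by_cases h : pc pX pC c = 0
  · have hx : pX x * pC x c = 0 :=
      (sum_eq_zero_iff_of_nonneg fun x _ => mul_nonneg (hpX0 x) (hpC0 x c)).mp h x (mem_univ x)
    simp [pxc, h, hx]
  · rw [pxc, mul_div_cancel₀ _ h]

theorem pc_mul_pac [Fintype X] {pX : X → ℝ} {pC : X → C → ℝ} (hpX0 : ∀ x, 0 ≤ pX x)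
    (hpC0 : ∀ x c, 0 ≤ pC x c) (ρ : X → A → ℝ) (c : C) (a : A) :
    pc pX pC c * pac pX pC ρ c a = ∑ x, pX x * pC x c * ρ x a := by
  simp only [pac, mul_sum, ← mul_assoc, pc_mul_pxc hpX0 hpC0]

theorem sum_joint_eq_sum_pe [Fintype X] [Fintype C] [Fintype A] [Fintype E]
    (pX : X → ℝ) {pC : X → C → ℝ} (hpC1 : ∀ x, ∑ c, pC x c = 1)
    (ρ : X → A → ℝ) (pE : X → A → E → ℝ) (W : X → E → ℝ) :
    ∑ x, ∑ c, ∑ a, ∑ e, pX x * pC x c * ρ x a * pE x a e * W x e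
      = ∑ x, pX x * ∑ e, pe pE ρ x e * W x e := by
  refine sum_congr rfl fun x _ => ?_
  have hinner : ∀ c, ∑ a, ∑ e, pX x * pC x c * ρ x a * pE x a e * W x e
      = pC x c * (pX x * ∑ e, pe pE ρ x e * W x e) := fun c => by
    simp only [pe, sum_mul, mul_sum]
    rw [sum_comm]
    exact sum_congr rfl fun e _ => sum_congr rfl fun a _ => by ring
  rw [sum_congr rfl fun c _ => hinner c, ← sum_mul, hpC1 x, one_mul]

theorem sum_joint_eq_sum_pc_mul_pac [Fintype X] [Fintype C] [Fintype A] [Fintype E]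
    {pX : X → ℝ} {pC : X → C → ℝ} (hpX0 : ∀ x, 0 ≤ pX x) (hpC0 : ∀ x c, 0 ≤ pC x c)
    (ρ : X → A → ℝ) {pE : X → A → E → ℝ} (hpE1 : ∀ x a, ∑ e, pE x a e = 1)
    (W : A → C → ℝ) :
    ∑ x, ∑ c, ∑ a, ∑ e, pX x * pC x c * ρ x a * pE x a e * W a c
      = ∑ c, pc pX pC c * ∑ a, pac pX pC ρ c a * W a c := by
  have hsum_e : ∀ x c a, ∑ e, pX x * pC x c * ρ x a * pE x a e * W a c
      = pX x * pC x c * ρ x a * W a c := fun x c a => by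
    simp only [mul_right_comm _ (pE x a _) (W a c), ← mul_sum, hpE1 x a, mul_one]
  simp only [hsum_e, mul_sum, ← mul_assoc, pc_mul_pac hpX0 hpC0, sum_mul]
  rw [sum_comm]
  exact sum_congr rfl fun c _ => sum_comm

theorem bias4_wMIPS [Fintype X] [Fintype C] [Fintype A] [Fintype E]
    {pX : X → ℝ} {pC : X → C → ℝ} {q : X → C → A → E → ℝ} {qE : X → E → ℝ}
    (hpC1 : ∀ x, ∑ c, pC x c = 1) (hqE : ∀ x c a e, q x c a e = qE x e)
    (π π₀ : X → A → ℝ) (pE : X → A → E → ℝ) :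
    bias4 pX pC π π₀ pE q (fun x _ _ e => wMIPS pE π π₀ x e)
      = -∑ x, pX x * ∑ e, if pe pE π₀ x e = 0 then pe pE π x e * qE x e else 0 := by
  have hmu := sum_joint_eq_sum_pe pX hpC1 π₀ pE fun x e => wMIPS pE π π₀ x e * qE x e
  simp only [← mul_assoc] at hmu
  rw [bias4, mu4, V4]
  simp only [P0, hqE, hmu, sum_joint_eq_sum_pe pX hpC1 π pE qE]
  exact sum_mul_sum_ratio_weighted_sub pX (pe pE π) (pe pE π₀) qE

theorem bias4_wCHIPS [Fintype X] [Fintype C] [Fintype A] [Fintype E]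
    {pX : X → ℝ} {pC : X → C → ℝ} {pE : X → A → E → ℝ} {q : X → C → A → E → ℝ}
    {qbar : A → C → ℝ} (hpX0 : ∀ x, 0 ≤ pX x) (hpC0 : ∀ x c, 0 ≤ pC x c)
    (hpE1 : ∀ x a, ∑ e, pE x a e = 1) (hqbar : ∀ x c a e, q x c a e = qbar a c)
    (π π₀ : X → A → ℝ) :
    bias4 pX pC π π₀ pE q (fun _ c a _ => wCHIPS pX pC π π₀ a c)
      = -∑ c, pc pX pC c * ∑ a,
          if pac pX pC π₀ c a = 0 then pac pX pC π c a * qbar a c else 0 := by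
  have hmu := sum_joint_eq_sum_pc_mul_pac hpX0 hpC0 π₀ hpE1 fun a c =>
    wCHIPS pX pC π π₀ a c * qbar a c
  simp only [← mul_assoc] at hmu
  rw [bias4, mu4, V4]
  simp only [P0, hqbar, hmu, sum_joint_eq_sum_pc_mul_pac hpX0 hpC0 π hpE1 qbar]
  exact sum_mul_sum_ratio_weighted_sub (pc pX pC) (fun c a => pac pX pC π c a)
    (fun c a => pac pX pC π₀ c a) fun c a => qbar a c

end

section

variable {X C A E : Type*} [Fintype X] [Fintype C] [Fintype A] [Fintype E]
  [Nonempty X] [Nonempty C] [Nonempty A] [Nonempty E]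

theorem prop9_mips_minus_chips_abs_bias_general
    (pX : X → ℝ) (pC : X → C → ℝ) (π π₀ : X → A → ℝ) (pE : X → A → E → ℝ)
    (q : X → C → A → E → ℝ) (qE : X → E → ℝ) (qbar : A → C → ℝ)
    (hpX0 : ∀ x, 0 ≤ pX x)
    (hpC0 : ∀ x c, 0 ≤ pC x c) (hpC1 : ∀ x, ∑ c, pC x c = 1)
    (hπ : ∀ x a, 0 ≤ π x a)
    (hpE0 : ∀ x a e, 0 ≤ pE x a e) (hpE1 : ∀ x a, ∑ e, pE x a e = 1)
    (hq0 : ∀ x c a e, 0 ≤ q x c a e)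
    (hqE : ∀ x c a e, q x c a e = qE x e)
    (hqbar : ∀ x c a e, q x c a e = qbar a c) :
    |bias4 pX pC π π₀ pE q (fun x c a e => wMIPS pE π π₀ x e)|
      - |bias4 pX pC π π₀ pE q (fun x c a e => wCHIPS pX pC π π₀ a c)|
    = (∑ x, pX x * ∑ e,
        if pe pE π₀ x e = 0 then pe pE π x e * qE x e else 0)
      - (∑ c, pc pX pC c * ∑ a,
        if pac pX pC π₀ c a = 0 then pac pX pC π c a * qbar a c else 0) := by
  have hqE0 : ∀ x e, 0 ≤ qE x e := fun x e =>
    hqE x (Classical.arbitrary C) (Classical.arbitrary A) e ▸ hq0 _ _ _ _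
  have hqbar0 : ∀ a c, 0 ≤ qbar a c := fun a c =>
    hqbar (Classical.arbitrary X) c a (Classical.arbitrary E) ▸ hq0 _ _ _ _
  rw [bias4_wMIPS hpC1 hqE, bias4_wCHIPS hpX0 hpC0 hpE1 hqbar, abs_neg, abs_neg,
    abs_of_nonneg (sum_mul_sum_ite_nonneg _ hpX0 (pe_nonneg hπ hpE0) hqE0),
    abs_of_nonneg (sum_mul_sum_ite_nonneg _ (pc_nonneg hpX0 hpC0) (pac_nonneg hpX0 hpC0 hπ)
      fun c a => hqbar0 a c)]

/-- Proposition 9, MIPS part (difference of absolute biases of MIPS and CHIPS). -/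
theorem prop9_mips_minus_chips_abs_bias
    (pX : X → ℝ) (pC : X → C → ℝ) (π π₀ : X → A → ℝ) (pE : X → A → E → ℝ)
    (q : X → C → A → E → ℝ) (qE : X → E → ℝ) (qbar : A → C → ℝ)
    (hpX0 : ∀ x, 0 ≤ pX x) (hpX1 : ∑ x, pX x = 1)
    (hpC0 : ∀ x c, 0 ≤ pC x c) (hpC1 : ∀ x, ∑ c, pC x c = 1)
    (hπ : ∀ x a, 0 ≤ π x a) (hπ1 : ∀ x, ∑ a, π x a = 1)
    (hπ₀ : ∀ x a, 0 ≤ π₀ x a) (hπ₀1 : ∀ x, ∑ a, π₀ x a = 1)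
    (hpE0 : ∀ x a e, 0 ≤ pE x a e) (hpE1 : ∀ x a, ∑ e, pE x a e = 1)
    (hq0 : ∀ x c a e, 0 ≤ q x c a e)
    (hqE : ∀ x c a e, q x c a e = qE x e)
    (hqbar : ∀ x c a e, q x c a e = qbar a c) :
    |bias4 pX pC π π₀ pE q (fun x c a e => wMIPS pE π π₀ x e)|
      - |bias4 pX pC π π₀ pE q (fun x c a e => wCHIPS pX pC π π₀ a c)|
    = (∑ x, pX x * ∑ e,
        if pe pE π₀ x e = 0 then pe pE π x e * qE x e else 0)
      - (∑ c, pc pX pC c * ∑ a,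
        if pac pX pC π₀ c a = 0 then pac pX pC π c a * qbar a c else 0) :=
  prop9_mips_minus_chips_abs_bias_general pX pC π π₀ pE q qE qbar hpX0 hpC0 hpC1 hπ hpE0 hpE1 hq0
    hqE hqbar

end

end OPE
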